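/- Fix γ ∈ (0,1] and let U(t), t ≥ 0, be i.i.d. {0,1}-valued with P(U(t) = 1) = γ, independent of the arrival process. Let the 3-queue path-graph system evolve under the randomized policy ρ_γ: if ζ(t) ∈ {(1,1,1), (1,0,1)} then S(t) = (1,0,1); if ζ(t) ∈ {(1,1,0), (0,1,1)} then S(t) = (0,1,0) when U(t) = 1 and S(t) = (1,0,1) when U(t) = 0; otherwise S(t) = ζ(t). If λ ∈ [0,1]^3 satisfies λ_1 + λ_2 < γ and λ_2 + λ_3 < γ, then limsup_{T→∞} (1/T) ∑_{t=0}^{T−1} ∑_{i=1}^{3} E[Q_i(t)] < ∞; that is, ρ_γ stabilizes every rate vector in Λ_γ = {λ : λ_1+λ_2 < γ, λ_2+λ_3 < γ}. -/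

import Mathlib

/-!
Lyapunov drift on the two edges of the path. On an edge `{j, k}` (queues 1–2 or 2–3), ρ_γ
serves one of the two queues whenever the edge is nonempty and the coin shows `U(t) = 1` (the
only unserved nonempty case is a tie lost to the coin), so `W = Q_j + Q_k` obeys
`W(t+1) ≤ (W(t) - U(t))⁺ + A_j(t) + A_k(t)`. Squaring, and using that `Q(t)` is a function of
the arrivals and coins before slot `t` and hence independent of `A(t)` and `U(t)`,
`E W(t+1)² ≤ E W(t)² - 2 (γ - λ_j - λ_k) E W(t) + 4`. Telescoping bounds the time average of
`E W` by `2 / (γ - λ_j - λ_k)`, and `Q_1 + Q_2 + Q_3 ≤ W_{12} + W_{23}`.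
-/

open MeasureTheory ProbabilityTheory Filter
open scoped ENNReal

/-- The randomized policy ρ_γ for the 3-queue path graph, as a function of the queue-length
vector `q` and the coin `u`: if queues 1 and 3 are both nonempty (occupancies `(1,1,1)` or
`(1,0,1)`), serve `(1,0,1)`; if the occupancy is `(1,1,0)` or `(0,1,1)`, serve `(0,1,0)` when
`u = 1` and `(1,0,1)` when `u = 0`; otherwise serve the occupancy vector itself. -/
def rhoPolicy (q : Fin 3 → ℕ) (u : ℕ) : Fin 3 → ℕ :=
  if 0 < q 0 ∧ 0 < q 2 then ![1, 0, 1]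
  else if (0 < q 0 ∧ 0 < q 1 ∧ q 2 = 0) ∨ (q 0 = 0 ∧ 0 < q 1 ∧ 0 < q 2) then
    (if u = 1 then ![0, 1, 0] else ![1, 0, 1])
  else fun i => if 0 < q i then 1 else 0

open Finset

lemma rhoPolicy_serves_edge (q : Fin 3 → ℕ) {u : ℕ} (hu : u ≤ 1) {j k : Fin 3}
    (hjk : j = 0 ∧ k = 1 ∨ j = 1 ∧ k = 2) :
    (q j - rhoPolicy q u j) + (q k - rhoPolicy q u k) ≤ q j + q k - u := by
  rcases hjk with ⟨rfl, rfl⟩ | ⟨rfl, rfl⟩ <;>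
    by_cases h0 : 0 < q 0 <;> by_cases h1 : 0 < q 1 <;> by_cases h2 : 0 < q 2 <;>
    interval_cases u <;> simp_all [rhoPolicy] <;> omega

lemma sq_add_add_two_mul_le {w w' u b : ℕ} (hw' : w' ≤ w - u) (hu : u ≤ 1) (hb : b ≤ 2) :
    (w' + b) ^ 2 + 2 * (w * u) ≤ w ^ 2 + 2 * (w * b) + 4 := by
  rcases le_or_gt u w with h | h
  · obtain ⟨d, rfl⟩ : ∃ d, w = d + u := ⟨w - u, by omega⟩
    have : w' ≤ d := by omega
    nlinarith
  · obtain ⟨rfl, rfl, rfl⟩ : u = 1 ∧ w = 0 ∧ w' = 0 := by omega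
    nlinarith

lemma add_mul_sum_range_le_of_drift {e s : ℕ → ℝ≥0∞} {ε C : ℝ≥0∞}
    (h : ∀ t, e (t + 1) + ε * s t ≤ e t + C) (T : ℕ) :
    e T + ε * ∑ t ∈ range T, s t ≤ e 0 + T * C := by
  induction T with
  | zero => simp
  | succ T ih =>
    calc e (T + 1) + ε * ∑ t ∈ range (T + 1), s t
        = (e (T + 1) + ε * s T) + ε * ∑ t ∈ range T, s t := by
          rw [sum_range_succ, mul_add]; ring
      _ ≤ (e T + C) + ε * ∑ t ∈ range T, s t := add_le_add_left (h T) _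
      _ = (e T + ε * ∑ t ∈ range T, s t) + C := add_right_comm _ _ _
      _ ≤ e 0 + (T + 1 : ℕ) * C := by
          push_cast; rw [add_mul, one_mul, ← add_assoc]; gcongr

lemma limsup_div_natCast_lt_top {u : ℕ → ℝ≥0∞} {C : ℝ≥0∞} (hC : C ≠ ⊤)
    (hu : ∀ T, u T ≤ C * T) : limsup (fun T : ℕ => u T / T) atTop < ⊤ :=
  (limsup_le_of_le (by isBoundedDefault)
    (Eventually.of_forall fun T => ENNReal.div_le_of_le_mul (hu T))).trans_lt hC.lt_top

lemma lintegral_natCast_eq_measure_of_le_one {Ω : Type*} [MeasurableSpace Ω] (μ : Measure Ω)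
    {g : Ω → ℕ} (hg : Measurable g) (h1 : ∀ ω, g ω ≤ 1) :
    ∫⁻ ω, (g ω : ℝ≥0∞) ∂μ = μ {ω | g ω = 1} := by
  calc ∫⁻ ω, (g ω : ℝ≥0∞) ∂μ = ∫⁻ ω, {ω | g ω = 1}.indicator 1 ω ∂μ :=
        lintegral_congr fun ω => by
          rcases Nat.le_one_iff_eq_zero_or_eq_one.mp (h1 ω) with h | h <;> simp [h]
    _ = μ {ω | g ω = 1} := lintegral_indicator_one (hg (measurableSet_singleton 1))

namespace ProbabilityTheory.iIndepFun

variable {Ω ι β : Type*} [MeasurableSpace Ω] [mβ : MeasurableSpace β] {μ : Measure Ω}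
  {f : ι → Ω → β}

lemma lintegral_mul_eq_of_measurable_iSup (hind : iIndepFun f μ) (hf : ∀ i, Measurable (f i))
    {S : Set ι} {x : ι} (hx : x ∉ S) {X : Ω → ℝ≥0∞}
    (hX : Measurable[⨆ i ∈ S, mβ.comap (f i)] X) {g : β → ℝ≥0∞} (hg : Measurable g) :
    ∫⁻ ω, X ω * g (f x ω) ∂μ = (∫⁻ ω, X ω ∂μ) * ∫⁻ ω, g (f x ω) ∂μ := by
  have hle : ∀ i, mβ.comap (f i) ≤ ‹MeasurableSpace Ω› := fun i => (hf i).comap_le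
  have hST : Disjoint S {x} := Set.disjoint_singleton_right.mpr hx
  refine lintegral_mul_eq_lintegral_mul_lintegral_of_independent_measurableSpace
    (iSup₂_le fun i _ => hle i) (iSup₂_le fun i _ => hle i)
    (indep_iSup_of_disjoint hle ((iIndepFun_iff_iIndep _ _ _).mp hind) hST) hX ?_
  exact (hg.comp (comap_measurable (f x))).mono
    (le_iSup₂ (f := fun i (_ : i ∈ ({x} : Set ι)) => mβ.comap (f i)) x rfl) le_rfl

end ProbabilityTheory.iIndepFun

section PathGraph

variable {Ω : Type*} {A : Fin 3 → ℕ → Ω → ℕ} {U : ℕ → Ω → ℕ} {Q : ℕ → Fin 3 → Ω → ℕ}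

def drivingNoise (A : Fin 3 → ℕ → Ω → ℕ) (U : ℕ → Ω → ℕ) : (Fin 3 × ℕ) ⊕ ℕ → Ω → ℕ :=
  Sum.elim (fun p => A p.1 p.2) U

def slot : (Fin 3 × ℕ) ⊕ ℕ → ℕ := Sum.elim Prod.snd id

abbrev history (A : Fin 3 → ℕ → Ω → ℕ) (U : ℕ → Ω → ℕ) (t : ℕ) : MeasurableSpace Ω :=
  ⨆ x ∈ {x | slot x < t}, MeasurableSpace.comap (drivingNoise A U x) inferInstance

lemma measurable_drivingNoise_history {t : ℕ} {x : (Fin 3 × ℕ) ⊕ ℕ} (hx : slot x < t) :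
    Measurable[history A U t] (drivingNoise A U x) :=
  (comap_measurable _).mono
    (le_iSup₂ (f := fun y (_ : y ∈ {y | slot y < t}) =>
      MeasurableSpace.comap (drivingNoise A U y) inferInstance) x hx) le_rfl

lemma history_mono : Monotone (history (Ω := Ω) A U) := fun _ _ hst =>
  biSup_mono fun _ hx => lt_of_lt_of_le hx hst

lemma measurable_queues_history (hQ0 : ∀ i ω, Q 0 i ω = 0)
    (hQevol : ∀ t i ω,
      Q (t + 1) i ω = Q t i ω - rhoPolicy (fun j => Q t j ω) (U t ω) i + A i t ω) (t : ℕ) :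
    Measurable[history A U t] fun ω j => Q t j ω := by
  induction t with
  | zero => simp only [hQ0]; exact measurable_const
  | succ t ih =>
    have hU : Measurable[history A U (t + 1)] (U t) :=
      measurable_drivingNoise_history (x := .inr t) (Nat.lt_succ_self t)
    have hA : Measurable[history A U (t + 1)] fun ω j => A j t ω :=
      letI := history A U (t + 1)
      measurable_pi_lambda _ fun j =>
        measurable_drivingNoise_history (x := .inl (j, t)) (Nat.lt_succ_self t)
    have hstep : (fun ω j => Q (t + 1) j ω) =
        (fun (p : (Fin 3 → ℕ) × ℕ × (Fin 3 → ℕ)) j => p.1 j - rhoPolicy p.1 p.2.1 j + p.2.2 j)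
          ∘ fun ω => ((fun j => Q t j ω), U t ω, fun j => A j t ω) := by
      funext ω j
      exact hQevol t j ω
    have hQt : Measurable[history A U (t + 1)] fun ω j => Q t j ω :=
      ih.mono (history_mono t.le_succ) le_rfl
    rw [hstep]
    exact (measurable_of_countable _).comp (hQt.prodMk (hU.prodMk hA))

lemma queue_le (hQ0 : ∀ i ω, Q 0 i ω = 0) (hA01 : ∀ i t ω, A i t ω ≤ 1)
    (hQevol : ∀ t i ω,
      Q (t + 1) i ω = Q t i ω - rhoPolicy (fun j => Q t j ω) (U t ω) i + A i t ω)
    (t : ℕ) (i : Fin 3) (ω : Ω) : Q t i ω ≤ t := by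
  induction t with
  | zero => simp [hQ0]
  | succ t ih => have := hA01 i t ω; rw [hQevol]; omega

lemma edge_sq_drift (hA01 : ∀ i t ω, A i t ω ≤ 1) (hU01 : ∀ t ω, U t ω ≤ 1)
    (hQevol : ∀ t i ω,
      Q (t + 1) i ω = Q t i ω - rhoPolicy (fun j => Q t j ω) (U t ω) i + A i t ω)
    {j k : Fin 3} (hjk : j = 0 ∧ k = 1 ∨ j = 1 ∧ k = 2) (t : ℕ) (ω : Ω) :
    (Q (t + 1) j ω + Q (t + 1) k ω) ^ 2 + 2 * ((Q t j ω + Q t k ω) * U t ω)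
      ≤ (Q t j ω + Q t k ω) ^ 2 + 2 * ((Q t j ω + Q t k ω) * (A j t ω + A k t ω)) + 4 := by
  rw [hQevol t j ω, hQevol t k ω, add_add_add_comm]
  exact sq_add_add_two_mul_le (rhoPolicy_serves_edge (fun i => Q t i ω) (hU01 t ω) hjk)
    (hU01 t ω) (by have := hA01 j t ω; have := hA01 k t ω; omega)

variable [MeasurableSpace Ω] {μ : Measure Ω}

lemma measurable_drivingNoise (hAmeas : ∀ i t, Measurable (A i t))
    (hUmeas : ∀ t, Measurable (U t)) : ∀ x, Measurable (drivingNoise A U x)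
  | .inl (i, t) => hAmeas i t
  | .inr t => hUmeas t

lemma history_le (hAmeas : ∀ i t, Measurable (A i t)) (hUmeas : ∀ t, Measurable (U t))
    (t : ℕ) : history A U t ≤ ‹MeasurableSpace Ω› :=
  iSup₂_le fun x _ => (measurable_drivingNoise hAmeas hUmeas x).comap_le

lemma measurable_queue (hAmeas : ∀ i t, Measurable (A i t)) (hUmeas : ∀ t, Measurable (U t))
    (hQ0 : ∀ i ω, Q 0 i ω = 0)
    (hQevol : ∀ t i ω,
      Q (t + 1) i ω = Q t i ω - rhoPolicy (fun j => Q t j ω) (U t ω) i + A i t ω)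
    (t : ℕ) (i : Fin 3) : Measurable (Q t i) :=
  measurable_pi_iff.mp
    ((measurable_queues_history hQ0 hQevol t).mono (history_le hAmeas hUmeas t) le_rfl) i

lemma lintegral_mul_drivingNoise (hindep : iIndepFun (drivingNoise A U) μ)
    (hAmeas : ∀ i t, Measurable (A i t)) (hUmeas : ∀ t, Measurable (U t))
    {t : ℕ} {X : Ω → ℝ≥0∞} (hX : Measurable[history A U t] X) {x : (Fin 3 × ℕ) ⊕ ℕ}
    (hx : slot x = t) :
    ∫⁻ ω, X ω * drivingNoise A U x ω ∂μ
      = (∫⁻ ω, X ω ∂μ) * ∫⁻ ω, (drivingNoise A U x ω : ℝ≥0∞) ∂μ :=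
  hindep.lintegral_mul_eq_of_measurable_iSup (measurable_drivingNoise hAmeas hUmeas)
    (by simp [hx]) hX measurable_from_nat

lemma lintegral_edge_sq_drift [IsProbabilityMeasure μ] {p : ℝ≥0∞} {a : Fin 3 → ℝ≥0∞}
    (hindep : iIndepFun (drivingNoise A U) μ)
    (hAmeas : ∀ i t, Measurable (A i t)) (hUmeas : ∀ t, Measurable (U t))
    (hA01 : ∀ i t ω, A i t ω ≤ 1) (hU01 : ∀ t ω, U t ω ≤ 1)
    (hEA : ∀ i t, ∫⁻ ω, (A i t ω : ℝ≥0∞) ∂μ = a i)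
    (hEU : ∀ t, ∫⁻ ω, (U t ω : ℝ≥0∞) ∂μ = p)
    (hQ0 : ∀ i ω, Q 0 i ω = 0)
    (hQevol : ∀ t i ω,
      Q (t + 1) i ω = Q t i ω - rhoPolicy (fun j => Q t j ω) (U t ω) i + A i t ω)
    {j k : Fin 3} (hjk : j = 0 ∧ k = 1 ∨ j = 1 ∧ k = 2) (t : ℕ) :
    ∫⁻ ω, ((Q (t + 1) j ω + Q (t + 1) k ω : ℕ) : ℝ≥0∞) ^ 2 ∂μ
        + 2 * ((∫⁻ ω, ((Q t j ω + Q t k ω : ℕ) : ℝ≥0∞) ∂μ) * p)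
      ≤ ∫⁻ ω, ((Q t j ω + Q t k ω : ℕ) : ℝ≥0∞) ^ 2 ∂μ
        + 2 * ((∫⁻ ω, ((Q t j ω + Q t k ω : ℕ) : ℝ≥0∞) ∂μ) * (a j + a k)) + 4 := by
  set w : ℕ → Ω → ℝ≥0∞ := fun t ω => ((Q t j ω + Q t k ω : ℕ) : ℝ≥0∞)
  have hQ := measurable_queue hAmeas hUmeas hQ0 hQevol
  have hw_hist : Measurable[history A U t] (w t) :=
    (measurable_of_countable fun q : Fin 3 → ℕ => ((q j + q k : ℕ) : ℝ≥0∞)).comp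
      (measurable_queues_history hQ0 hQevol t)
  have hwU : ∫⁻ ω, w t ω * U t ω ∂μ = (∫⁻ ω, w t ω ∂μ) * p := by
    rw [← hEU t]
    exact lintegral_mul_drivingNoise hindep hAmeas hUmeas hw_hist (x := .inr t) rfl
  have hwA : ∀ i, ∫⁻ ω, w t ω * A i t ω ∂μ = (∫⁻ ω, w t ω ∂μ) * a i := fun i => by
    rw [← hEA i t]
    exact lintegral_mul_drivingNoise hindep hAmeas hUmeas hw_hist (x := .inl (i, t)) rfl
  have hpt : ∀ ω, w (t + 1) ω ^ 2 + 2 * (w t ω * U t ω)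
      ≤ w t ω ^ 2 + 2 * (w t ω * A j t ω + w t ω * A k t ω) + 4 := fun ω => by
    simp only [w, ← mul_add]
    exact_mod_cast edge_sq_drift hA01 hU01 hQevol hjk t ω
  calc _ = ∫⁻ ω, (w (t + 1) ω ^ 2 + 2 * (w t ω * U t ω)) ∂μ := by
        rw [lintegral_add_left (by fun_prop), lintegral_const_mul _ (by fun_prop), hwU]
    _ ≤ ∫⁻ ω, (w t ω ^ 2 + 2 * (w t ω * A j t ω + w t ω * A k t ω) + 4) ∂μ :=
        lintegral_mono hpt
    _ = _ := by
        rw [lintegral_add_right _ measurable_const, lintegral_add_left (by fun_prop),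
          lintegral_const_mul _ (by fun_prop), lintegral_add_left (by fun_prop), hwA, hwA,
          lintegral_const, measure_univ]
        ring
lemma sum_lintegral_edge_le [IsProbabilityMeasure μ] {p : ℝ≥0∞} {a : Fin 3 → ℝ≥0∞}
    (hindep : iIndepFun (drivingNoise A U) μ)
    (hAmeas : ∀ i t, Measurable (A i t)) (hUmeas : ∀ t, Measurable (U t))
    (hA01 : ∀ i t ω, A i t ω ≤ 1) (hU01 : ∀ t ω, U t ω ≤ 1)
    (hEA : ∀ i t, ∫⁻ ω, (A i t ω : ℝ≥0∞) ∂μ = a i)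
    (hEU : ∀ t, ∫⁻ ω, (U t ω : ℝ≥0∞) ∂μ = p)
    (hQ0 : ∀ i ω, Q 0 i ω = 0)
    (hQevol : ∀ t i ω,
      Q (t + 1) i ω = Q t i ω - rhoPolicy (fun j => Q t j ω) (U t ω) i + A i t ω)
    {j k : Fin 3} (hjk : j = 0 ∧ k = 1 ∨ j = 1 ∧ k = 2) (hgap : a j + a k < p) :
    ∃ C ≠ ⊤, ∀ T : ℕ,
      ∑ t ∈ range T, ∫⁻ ω, ((Q t j ω + Q t k ω : ℕ) : ℝ≥0∞) ∂μ ≤ C * T := by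
  set e : ℕ → ℝ≥0∞ := fun t => ∫⁻ ω, ((Q t j ω + Q t k ω : ℕ) : ℝ≥0∞) ^ 2 ∂μ
  set s : ℕ → ℝ≥0∞ := fun t => ∫⁻ ω, ((Q t j ω + Q t k ω : ℕ) : ℝ≥0∞) ∂μ
  set ε := p - (a j + a k)
  have hε : ε ≠ 0 := (tsub_pos_of_lt hgap).ne'
  have hs : ∀ t, s t ≠ ⊤ := fun t => ne_top_of_le_ne_top (ENNReal.natCast_ne_top (2 * t)) <|
    calc s t ≤ ∫⁻ _, ((2 * t : ℕ) : ℝ≥0∞) ∂μ := lintegral_mono fun ω => Nat.cast_le.mpr <| by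
          have := queue_le hQ0 hA01 hQevol t j ω
          have := queue_le hQ0 hA01 hQevol t k ω
          omega
      _ = (2 * t : ℕ) := by simp
  have hstep : ∀ t, e (t + 1) + 2 * ε * s t ≤ e t + 4 := fun t => by
    have hfin : 2 * (s t * (a j + a k)) ≠ ⊤ :=
      ENNReal.mul_ne_top ENNReal.ofNat_ne_top (ENNReal.mul_ne_top (hs t) hgap.ne_top)
    refine ENNReal.le_of_add_le_add_right hfin ?_
    calc e (t + 1) + 2 * ε * s t + 2 * (s t * (a j + a k))
        = e (t + 1) + 2 * (s t * p) := by
          rw [← add_tsub_cancel_of_le hgap.le]; ring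
      _ ≤ e t + 2 * (s t * (a j + a k)) + 4 :=
          lintegral_edge_sq_drift hindep hAmeas hUmeas hA01 hU01 hEA hEU hQ0 hQevol hjk t
      _ = e t + 4 + 2 * (s t * (a j + a k)) := add_right_comm _ _ _
  refine ⟨4 / (2 * ε), ENNReal.div_ne_top ENNReal.ofNat_ne_top (mul_ne_zero two_ne_zero hε),
    fun T => ?_⟩
  have htele := add_mul_sum_range_le_of_drift hstep T
  have he0 : e 0 = 0 := by simp [e, hQ0]
  rw [he0, zero_add] at htele
  calc ∑ t ∈ range T, s t ≤ T * 4 / (2 * ε) := by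
        rw [ENNReal.le_div_iff_mul_le (Or.inl (mul_ne_zero two_ne_zero hε))
          (Or.inr (ENNReal.mul_ne_top (ENNReal.natCast_ne_top T) ENNReal.ofNat_ne_top)), mul_comm]
        exact le_add_self.trans htele
    _ = 4 / (2 * ε) * T := by rw [div_eq_mul_inv, div_eq_mul_inv]; ring

lemma sum_lintegral_fin_three_le {f : Fin 3 → Ω → ℕ} (hf : ∀ i, Measurable (f i)) :
    ∑ i, ∫⁻ ω, (f i ω : ℝ≥0∞) ∂μ
      ≤ ∫⁻ ω, ((f 0 ω + f 1 ω : ℕ) : ℝ≥0∞) ∂μ + ∫⁻ ω, ((f 1 ω + f 2 ω : ℕ) : ℝ≥0∞) ∂μ := by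
  simp only [Nat.cast_add]
  rw [lintegral_add_left (by fun_prop), lintegral_add_left (by fun_prop), Fin.sum_univ_three]
  gcongr
  exact le_add_self

end PathGraph

theorem rho_gamma_stabilizes_Lambda_gamma_general
    {Ω : Type*} [MeasurableSpace Ω] (μ : Measure Ω) [IsProbabilityMeasure μ]
    (γ : ℝ) (hγ0 : 0 < γ)
    (lam : Fin 3 → ℝ) (hlam : ∀ i, 0 ≤ lam i ∧ lam i ≤ 1)
    (hcap1 : lam 0 + lam 1 < γ) (hcap2 : lam 1 + lam 2 < γ)
    (A : Fin 3 → ℕ → Ω → ℕ) (U : ℕ → Ω → ℕ)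
    (hAmeas : ∀ i t, Measurable (A i t)) (hUmeas : ∀ t, Measurable (U t))
    (hA01 : ∀ i t ω, A i t ω ≤ 1) (hU01 : ∀ t ω, U t ω ≤ 1)
    (hArate : ∀ i t, μ {ω | A i t ω = 1} = ENNReal.ofReal (lam i))
    (hUrate : ∀ t, μ {ω | U t ω = 1} = ENNReal.ofReal γ)
    -- the arrival variables and the randomization coins are jointly mutually independent
    (hindep : iIndepFun
      (fun x : (Fin 3 × ℕ) ⊕ ℕ =>
        Sum.elim (fun p : Fin 3 × ℕ => fun ω => A p.1 p.2 ω)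
          (fun t => fun ω => U t ω) x) μ)
    (Q : ℕ → Fin 3 → Ω → ℕ)
    (hQ0 : ∀ i ω, Q 0 i ω = 0)
    (hQevol : ∀ t i ω,
      Q (t + 1) i ω = Q t i ω - rhoPolicy (fun j => Q t j ω) (U t ω) i + A i t ω) :
    limsup (fun T : ℕ =>
        (∑ t ∈ Finset.range T, ∑ i, ∫⁻ ω, (Q t i ω : ℝ≥0∞) ∂μ) / (T : ℝ≥0∞))
      atTop < ⊤ := by
  have hnoise : iIndepFun (drivingNoise A U) μ := hindep
  have hEA : ∀ i t, ∫⁻ ω, (A i t ω : ℝ≥0∞) ∂μ = ENNReal.ofReal (lam i) := fun i t => by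
    rw [lintegral_natCast_eq_measure_of_le_one μ (hAmeas i t) (hA01 i t), hArate]
  have hEU : ∀ t, ∫⁻ ω, (U t ω : ℝ≥0∞) ∂μ = ENNReal.ofReal γ := fun t => by
    rw [lintegral_natCast_eq_measure_of_le_one μ (hUmeas t) (hU01 t), hUrate]
  have hgap : ∀ {j k}, lam j + lam k < γ →
      ENNReal.ofReal (lam j) + ENNReal.ofReal (lam k) < ENNReal.ofReal γ := fun h => by
    rwa [← ENNReal.ofReal_add (hlam _).1 (hlam _).1, ENNReal.ofReal_lt_ofReal_iff hγ0]
  obtain ⟨C₁, hC₁, h₁⟩ := sum_lintegral_edge_le hnoise hAmeas hUmeas hA01 hU01 hEA hEU hQ0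
    hQevol (Or.inl ⟨rfl, rfl⟩) (hgap hcap1)
  obtain ⟨C₂, hC₂, h₂⟩ := sum_lintegral_edge_le hnoise hAmeas hUmeas hA01 hU01 hEA hEU hQ0
    hQevol (Or.inr ⟨rfl, rfl⟩) (hgap hcap2)
  refine limsup_div_natCast_lt_top (ENNReal.add_ne_top.2 ⟨hC₁, hC₂⟩) fun T => ?_
  calc ∑ t ∈ range T, ∑ i, ∫⁻ ω, (Q t i ω : ℝ≥0∞) ∂μ
      ≤ ∑ t ∈ range T, (∫⁻ ω, ((Q t 0 ω + Q t 1 ω : ℕ) : ℝ≥0∞) ∂μ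
          + ∫⁻ ω, ((Q t 1 ω + Q t 2 ω : ℕ) : ℝ≥0∞) ∂μ) :=
        sum_le_sum fun t _ =>
          sum_lintegral_fin_three_le (measurable_queue hAmeas hUmeas hQ0 hQevol t)
    _ ≤ (C₁ + C₂) * T := by
        rw [sum_add_distrib, add_mul]
        exact add_le_add (h₁ T) (h₂ T)

/-- For every `γ ∈ (0,1]`, the randomized policy ρ_γ (which breaks inner/outer ties in favor
of the inner queue with probability `γ`, using i.i.d. Bernoulli(γ) coins independent of the
arrivals) stabilizes every rate vector in `Λ_γ = {λ : λ_1+λ_2 < γ, λ_2+λ_3 < γ}`. -/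
theorem rho_gamma_stabilizes_Lambda_gamma
    {Ω : Type*} [MeasurableSpace Ω] (μ : Measure Ω) [IsProbabilityMeasure μ]
    (γ : ℝ) (hγ0 : 0 < γ) (hγ1 : γ ≤ 1)
    (lam : Fin 3 → ℝ) (hlam : ∀ i, 0 ≤ lam i ∧ lam i ≤ 1)
    (hcap1 : lam 0 + lam 1 < γ) (hcap2 : lam 1 + lam 2 < γ)
    (A : Fin 3 → ℕ → Ω → ℕ) (U : ℕ → Ω → ℕ)
    (hAmeas : ∀ i t, Measurable (A i t)) (hUmeas : ∀ t, Measurable (U t))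
    (hA01 : ∀ i t ω, A i t ω ≤ 1) (hU01 : ∀ t ω, U t ω ≤ 1)
    (hArate : ∀ i t, μ {ω | A i t ω = 1} = ENNReal.ofReal (lam i))
    (hUrate : ∀ t, μ {ω | U t ω = 1} = ENNReal.ofReal γ)
    -- the arrival variables and the randomization coins are jointly mutually independent
    (hindep : iIndepFun
      (fun x : (Fin 3 × ℕ) ⊕ ℕ =>
        Sum.elim (fun p : Fin 3 × ℕ => fun ω => A p.1 p.2 ω)
          (fun t => fun ω => U t ω) x) μ)
    (Q : ℕ → Fin 3 → Ω → ℕ)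
    (hQ0 : ∀ i ω, Q 0 i ω = 0)
    (hQevol : ∀ t i ω,
      Q (t + 1) i ω = Q t i ω - rhoPolicy (fun j => Q t j ω) (U t ω) i + A i t ω) :
    limsup (fun T : ℕ =>
        (∑ t ∈ Finset.range T, ∑ i, ∫⁻ ω, (Q t i ω : ℝ≥0∞) ∂μ) / (T : ℝ≥0∞))
      atTop < ⊤ :=
  rho_gamma_stabilizes_Lambda_gamma_general μ γ hγ0 lam hlam hcap1 hcap2 A U hAmeas hUmeas hA01 hU01
    hArate hUrate hindep Q hQ0 hQevol
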